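/- Every finite sequence π of distinct natural numbers admits a unique factorization π = π₀π₁⋯π_k (as a concatenation, with k ≥ 0) in which π₀ is a (possibly empty) strictly increasing sequence and each π_i for 1 ≤ i ≤ k is a hook. -/

import Mathlib

namespace PaperStats

/-- `des w` is the number of descents of the word `w` (0-indexed positions `i`
with `w(i) > w(i+1)`). -/
def des (w : List ℕ) : ℕ :=
  ((Finset.range (w.length - 1)).filter fun i => w.getD (i + 1) 0 < w.getD i 0).card

/-- `inv w` is the number of inversions of the word `w`: pairs of positions
`i < j` with `w(i) > w(j)`. -/
def inv (w : List ℕ) : ℕ :=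
  ((Finset.range w.length ×ˢ Finset.range w.length).filter
    fun p => p.1 < p.2 ∧ w.getD p.2 0 < w.getD p.1 0).card

/-- An inversion `(i,j)` of `w` is admissible if either `w(j) < w(j+1)`
(`j` is not the last position and is followed by an ascent), or there is a
position `k` strictly between `i` and `j` with `w(j) > w(k)`. -/
def IsAdmissible (w : List ℕ) (i j : ℕ) : Prop :=
  (j + 1 < w.length ∧ w.getD j 0 < w.getD (j + 1) 0) ∨
    ∃ k, i < k ∧ k < j ∧ w.getD k 0 < w.getD j 0

instance (w : List ℕ) (i j : ℕ) : Decidable (IsAdmissible w i j) :=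
  decidable_of_iff ((j + 1 < w.length ∧ w.getD j 0 < w.getD (j + 1) 0) ∨
      ∃ k ∈ Finset.Ioo i j, w.getD k 0 < w.getD j 0) (by
    unfold IsAdmissible
    simp only [Finset.mem_Ioo, and_assoc])

/-- `ai w` is the number of admissible inversions of `w`. -/
def ai (w : List ℕ) : ℕ :=
  ((Finset.range w.length ×ˢ Finset.range w.length).filter
    fun p => p.1 < p.2 ∧ w.getD p.2 0 < w.getD p.1 0 ∧ IsAdmissible w p.1 p.2).card

/-- `aid w = ai w + des w`. -/
def aid (w : List ℕ) : ℕ := ai w + des w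

/-- The statistic `aix`, defined recursively: `aix ∅ = 0`; writing a nonempty
word as `π = α m β`, where `m` is the smallest letter and `α` is the maximal
prefix not containing `m`, one has `aix π = 1 + aix β` if `α = ∅`,
`aix π = 0` if `β = ∅` (and `α ≠ ∅`), and `aix π = aix α` otherwise. -/
def aix : List ℕ → ℕ
  | [] => 0
  | x :: xs =>
    if (x :: xs).takeWhile (fun a => decide (a ≠ xs.foldr min x)) = [] then
      1 + aix (((x :: xs).dropWhile (fun a => decide (a ≠ xs.foldr min x))).tail)
    else if ((x :: xs).dropWhile (fun a => decide (a ≠ xs.foldr min x))).tail = [] then 0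
    else aix ((x :: xs).takeWhile (fun a => decide (a ≠ xs.foldr min x)))
termination_by w => w.length
decreasing_by
  all_goals have e : List.foldr (fun (t : {a // a ∈ xs}) s => min t.1 s) x xs.attach =
    xs.foldr min x := List.foldr_attach
  all_goals simp only [e] at *
  · have h1 := (List.dropWhile_sublist (l := x :: xs) (fun a => decide (a ≠ xs.foldr min x))).length_le
    have h2 := List.length_tail (l := (x :: xs).dropWhile (fun a => decide (a ≠ xs.foldr min x)))
    simp only [List.length_cons] at *
    omega
  · rename_i hα hβ
    have h0 : ((x :: xs).takeWhile (fun a => decide (a ≠ xs.foldr min x))) ++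
        ((x :: xs).dropWhile (fun a => decide (a ≠ xs.foldr min x))) = x :: xs :=
      List.takeWhile_append_dropWhile ..
    have h1 : ((x :: xs).dropWhile (fun a => decide (a ≠ xs.foldr min x))) ≠ [] := by
      intro h
      apply hβ
      rw [h]
      rfl
    have h2 := congrArg List.length h0
    simp only [List.length_append, List.length_cons] at h2
    have h3 : 0 < ((x :: xs).dropWhile (fun a => decide (a ≠ xs.foldr min x))).length :=
      List.length_pos_iff.mpr h1
    simp only [List.length_cons]
    omega

/-- The map `f(k,τ)`: with `m` the smallest letter of `τ` together with `k`
(`k` not occurring in `τ`), and `τ = α m β` with `α` the maximal prefix of `τ`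
avoiding `m`: `f(k,∅) = k`; `f(k,τ) = kτ` if `k = m`; and for `k > m`,
`f(k,τ) = f(k,β) m` if `α = ∅`, `f(k,τ) = k m α` if `β = ∅`, and
`f(k,τ) = f(k,α) m β` otherwise. -/
def fkt (k : ℕ) : List ℕ → List ℕ
  | [] => [k]
  | x :: xs =>
    if k < xs.foldr min x then k :: x :: xs
    else if (x :: xs).takeWhile (fun a => decide (a ≠ xs.foldr min x)) = [] then
      fkt k (((x :: xs).dropWhile (fun a => decide (a ≠ xs.foldr min x))).tail) ++
        [xs.foldr min x]
    else if ((x :: xs).dropWhile (fun a => decide (a ≠ xs.foldr min x))).tail = [] then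
      k :: xs.foldr min x :: ((x :: xs).takeWhile (fun a => decide (a ≠ xs.foldr min x)))
    else
      fkt k ((x :: xs).takeWhile (fun a => decide (a ≠ xs.foldr min x))) ++
        xs.foldr min x :: ((x :: xs).dropWhile (fun a => decide (a ≠ xs.foldr min x))).tail
termination_by w => w.length
decreasing_by
  all_goals have e : List.foldr (fun (t : {a // a ∈ xs}) s => min t.1 s) x xs.attach =
    xs.foldr min x := List.foldr_attach
  all_goals simp only [e] at *
  · have h1 := (List.dropWhile_sublist (l := x :: xs) (fun a => decide (a ≠ xs.foldr min x))).length_le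
    have h2 := List.length_tail (l := (x :: xs).dropWhile (fun a => decide (a ≠ xs.foldr min x)))
    simp only [List.length_cons] at *
    omega
  · rename_i hk hα hβ
    have h0 : ((x :: xs).takeWhile (fun a => decide (a ≠ xs.foldr min x))) ++
        ((x :: xs).dropWhile (fun a => decide (a ≠ xs.foldr min x))) = x :: xs :=
      List.takeWhile_append_dropWhile ..
    have h1 : ((x :: xs).dropWhile (fun a => decide (a ≠ xs.foldr min x))) ≠ [] := by
      intro h
      apply hβ
      rw [h]
      rfl
    have h2 := congrArg List.length h0
    simp only [List.length_append, List.length_cons] at h2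
    have h3 : 0 < ((x :: xs).dropWhile (fun a => decide (a ≠ xs.foldr min x))).length :=
      List.length_pos_iff.mpr h1
    simp only [List.length_cons]
    omega

/-- `ini w` is the first letter of `w`. -/
def ini (w : List ℕ) : ℕ := w.headD 0

/-- The word of a permutation `π ∈ S_n`, namely `π(1) π(2) … π(n)`
(with values in `{1, …, n}`). -/
def permList {n : ℕ} (π : Equiv.Perm (Fin n)) : List ℕ :=
  List.ofFn fun i => (π i : ℕ) + 1

/-- The bijection `φ`: `φ(π) = f(π(1), f(π(2), ⋯ f(π(n), ∅) ⋯ ))`. -/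
def phiW (w : List ℕ) : List ℕ := w.foldr fkt []

/-- Helper: `decRun l` splits `l` into its maximal weakly decreasing prefix
and the rest. -/
def decRun : List ℕ → List ℕ × List ℕ
  | [] => ([], [])
  | [x] => ([x], [])
  | x :: y :: rest =>
    if y ≤ x then ((x :: (decRun (y :: rest)).1), (decRun (y :: rest)).2)
    else ([x], y :: rest)

theorem decRun_append : ∀ l : List ℕ, (decRun l).1 ++ (decRun l).2 = l
  | [] => rfl
  | [x] => rfl
  | x :: y :: rest => by
    rw [decRun]
    split
    · simpa using decRun_append (y :: rest)
    · rfl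

/-- Helper computing the hook factorization of a word from its reversal: the
rightmost hook of the word starts at its rightmost descent top, i.e. it is
obtained by extending the maximal weakly decreasing prefix of the reversed word
by one more letter; the process is repeated on what remains, and when no
letters usable for a hook remain the word left over is the increasing part
`π₀`. The result is `(π₀, [π₁, …, π_k])`. -/
def hookRev (r : List ℕ) : List ℕ × List (List ℕ) :=
  match h : (decRun r).2 with
  | [] => (r.reverse, [])
  | z :: rest =>
    ((hookRev rest).1, (hookRev rest).2 ++ [z :: (decRun r).1.reverse])
termination_by r.length
decreasing_by
  have h2 := congrArg List.length (decRun_append r)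
  rw [h] at h2
  simp only [List.length_append, List.length_cons] at h2
  omega

/-- The hook factorization `(π₀, [π₁, …, π_k])` of a word
`w = π₀ π₁ ⋯ π_k`, where `π₀` is increasing and each `π_i`, `i ≥ 1`, is a
hook. -/
def hookSplit (w : List ℕ) : List ℕ × List (List ℕ) := hookRev w.reverse

/-- `pix w` is the length of the initial increasing factor `π₀` in the hook
factorization of `w`. -/
def pix (w : List ℕ) : ℕ := (hookSplit w).1.length

/-- `lec w` is the sum of the numbers of inversions of the hooks in the hook
factorization of `w`. -/
def lec (w : List ℕ) : ℕ := ((hookSplit w).2.map inv).sum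

/-- A word `w(1) … w(r)` with `r ≥ 2` is a hook if
`w(1) > w(2) ≤ w(3) ≤ ⋯ ≤ w(r)`. -/
def IsHook (w : List ℕ) : Prop :=
  ∃ a b rest, w = a :: b :: rest ∧ b < a ∧ List.Chain' (· ≤ ·) (b :: rest)

/-- `w(i)` is a left-to-right maximum of `w` if `w(k) < w(i)` for all `k < i`. -/
def IsLRMax (w : List ℕ) (i : ℕ) : Prop := ∀ k < i, w.getD k 0 < w.getD i 0

instance (w : List ℕ) (i : ℕ) : Decidable (IsLRMax w i) := by
  unfold IsLRMax; infer_instance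

/-- `mix w` counts the pairs of positions `i < j` such that either
`w(i) > w(j)` and `w(i)` is a left-to-right maximum, or `w(i) < w(j)` and
there is `k < i` with `w(k) > w(j)`. -/
def mix (w : List ℕ) : ℕ :=
  ((Finset.range w.length ×ˢ Finset.range w.length).filter fun p =>
    p.1 < p.2 ∧ ((w.getD p.2 0 < w.getD p.1 0 ∧ IsLRMax w p.1) ∨
      (w.getD p.1 0 < w.getD p.2 0 ∧ ∃ k ∈ Finset.range p.1, w.getD p.2 0 < w.getD k 0))).card

/-- `das w` counts the positions `i` such that either `w(i) > w(i+1)` and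
`w(i)` is a left-to-right maximum, or `w(i) < w(i+1)` and there is `k < i`
with `w(k) > w(i+1)`. -/
def das (w : List ℕ) : ℕ :=
  ((Finset.range (w.length - 1)).filter fun i =>
    (w.getD (i + 1) 0 < w.getD i 0 ∧ IsLRMax w i) ∨
      (w.getD i 0 < w.getD (i + 1) 0 ∧ ∃ k ∈ Finset.range i, w.getD (i + 1) 0 < w.getD k 0)).card

/-- The values of the left-to-right maxima of a word, listed in increasing
order (which is also their order of occurrence). -/
def lrMaxima : List ℕ → List ℕ
  | [] => []
  | x :: xs => x :: lrMaxima (xs.filter fun a => decide (x < a))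
termination_by l => l.length
decreasing_by
  have e := List.length_filter_le (l := xs.attach) (fun (t : {a // a ∈ xs}) => decide (x < t.1))
  simp only [List.length_unattach, List.length_attach] at e ⊢
  have := xs.length_filter_le (fun a => decide (x < a))
  simp only [List.length_cons]
  exact Nat.lt_succ_of_le e

/-- `Bset w m` is the list of entries of `w` that are smaller than `m` and lie
to the right of (the first occurrence of) `m` in `w`. -/
def Bset (w : List ℕ) (m : ℕ) : List ℕ :=
  ((w.dropWhile fun a => decide (a ≠ m)).tail).filter fun a => decide (a < m)

/-- Helper for `psiS`: replace the letters satisfying `P`, in order, by the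
letters of the first list. -/
def replaceSub (P : ℕ → Bool) : List ℕ → List ℕ → List ℕ
  | _, [] => []
  | rs, x :: xs =>
    if P x then rs.headD x :: replaceSub P rs.tail xs else x :: replaceSub P rs xs

/-- `psiS S w` is `ψ_S(w)`: the result of reversing, in place, the subword of
`w` consisting of the entries belonging to `S`. -/
def psiS (S : List ℕ) (w : List ℕ) : List ℕ :=
  replaceSub (fun a => decide (a ∈ S)) ((w.filter fun a => decide (a ∈ S)).reverse) w

/-- Helper applying the alternating composition
`ψ_{B₁} ∘ ψ_{B₂ ∩ B₁} ∘ ψ_{B₂} ∘ ⋯ ∘ ψ_{B_{k-1}} ∘ ψ_{B_k ∩ B_{k-1}} ∘ ψ_{B_k}`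
to `w`, given the list `[B_k, B_{k-1}, …, B₁]`. -/
def psiChain : List (List ℕ) → List ℕ → List ℕ
  | [], w => w
  | [B], w => psiS B w
  | B :: B' :: rest, w => psiChain (B' :: rest) (psiS (B.inter B') (psiS B w))

/-- The Brändén–Claesson bijection `ψ`. -/
def psi (w : List ℕ) : List ℕ :=
  psiChain (((lrMaxima w).map (Bset w)).reverse) w

/-! Cutting a word at its last descent top leaves a hook at the end, and the prefix factors
by induction; a word without descents is increasing because its letters are distinct.
Conversely, a proper suffix of a hook is weakly increasing, so it contains no hook, and neither
does `π₀`. Hence two hooks ending the same word coincide, and peeling off last hooks proves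
uniqueness. -/

def IsHookFactorization (w : List ℕ) (p : List ℕ × List (List ℕ)) : Prop :=
  w = p.1 ++ p.2.flatten ∧ p.1.IsChain (· < ·) ∧ ∀ h ∈ p.2, IsHook h

theorem IsHook.two_le_length {g : List ℕ} (hg : IsHook g) : 2 ≤ g.length := by
  obtain ⟨a, b, rest, rfl, -⟩ := hg
  simp

theorem IsHook.not_isChain_le {g : List ℕ} (hg : IsHook g) : ¬ g.IsChain (· ≤ ·) := by
  obtain ⟨a, b, rest, rfl, hba, -⟩ := hg
  rw [List.isChain_cons_cons]
  exact fun h => (not_le.mpr hba) h.1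

theorem IsHook.eq_of_isSuffix {g h : List ℕ} (hg : IsHook g) (hh : IsHook h) (hgh : g <:+ h) :
    g = h := by
  obtain ⟨a, b, rest, rfl, -, hrest⟩ := hh
  rcases List.suffix_cons_iff.mp hgh with rfl | hg_rest
  · rfl
  · exact absurd (List.IsChain.infix hrest hg_rest.isInfix) hg.not_isChain_le

theorem IsHook.eq_of_isSuffix_of_isSuffix {g h w : List ℕ} (hg : IsHook g) (hh : IsHook h)
    (hgw : g <:+ w) (hhw : h <:+ w) : g = h := by
  rcases List.suffix_or_suffix_of_suffix hgw hhw with hgh | hhg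
  · exact hg.eq_of_isSuffix hh hgh
  · exact (hh.eq_of_isSuffix hg hhg).symm

theorem exists_eq_append_isHook {w : List ℕ} (hw : ¬ w.IsChain (· ≤ ·)) :
    ∃ u g, w = u ++ g ∧ IsHook g := by
  induction w with
  | nil => exact absurd List.isChain_nil hw
  | cons x xs ih =>
    by_cases hxs : xs.IsChain (· ≤ ·)
    · cases xs with
      | nil => exact absurd (List.isChain_singleton x) hw
      | cons y ys =>
        have hyx : y < x := lt_of_not_ge fun hxy => hw (hxs.cons_cons hxy)
        exact ⟨[], x :: y :: ys, rfl, x, y, ys, rfl, hyx, hxs⟩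
    · obtain ⟨u, g, rfl, hg⟩ := ih hxs
      exact ⟨x :: u, g, rfl, hg⟩

theorem exists_isHookFactorization (w : List ℕ) (hw : w.Nodup) :
    ∃ p, IsHookFactorization w p := by
  by_cases hinc : w.IsChain (· ≤ ·)
  · have hlt : w.IsChain (· < ·) :=
      (List.sortedLT_iff_nodup_and_sortedLE.mpr ⟨hw, hinc.sortedLE⟩).isChain
    exact ⟨(w, []), by simp, hlt, by simp⟩
  · obtain ⟨u, g, hwug, hg⟩ := exists_eq_append_isHook hinc
    have hlen : u.length < w.length := by
      have := hg.two_le_length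
      rw [hwug, List.length_append]
      omega
    obtain ⟨⟨u₀, hooks⟩, rfl, hu₀, hhooks⟩ :=
      exists_isHookFactorization u (hw.sublist (hwug ▸ List.sublist_append_left u g))
    refine ⟨(u₀, hooks ++ [g]), by simp [hwug], hu₀, ?_⟩
    simpa [or_imp, forall_and] using ⟨hhooks, hg⟩
termination_by w.length
decreasing_by assumption

theorem eq_nil_of_isChain_lt_of_eq_append_flatten {u v : List ℕ} {hooks : List (List ℕ)}
    (hu : u.IsChain (· < ·)) (huv : u = v ++ hooks.flatten) (hhooks : ∀ h ∈ hooks, IsHook h) :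
    hooks = [] := by
  rcases hooks.eq_nil_or_concat with rfl | ⟨hooks', g, rfl⟩
  · rfl
  · have hgu : g <:+ u := ⟨v ++ hooks'.flatten, by simp [huv]⟩
    exact absurd ((hu.imp fun _ _ => le_of_lt).infix hgu.isInfix)
      (hhooks g (by simp)).not_isChain_le

theorem eq_of_append_flatten_eq_append_flatten {u v : List ℕ} {P Q : List (List ℕ)}
    (hw : u ++ P.flatten = v ++ Q.flatten) (hu : u.IsChain (· < ·)) (hv : v.IsChain (· < ·))
    (hP : ∀ h ∈ P, IsHook h) (hQ : ∀ h ∈ Q, IsHook h) : u = v ∧ P = Q := by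
  induction P using List.reverseRecOn generalizing Q with
  | nil =>
    obtain rfl := eq_nil_of_isChain_lt_of_eq_append_flatten hu (by simpa using hw) hQ
    simpa using hw
  | append_singleton P h ih =>
    rcases Q.eq_nil_or_concat with rfl | ⟨Q, g, rfl⟩
    · simpa using eq_nil_of_isChain_lt_of_eq_append_flatten hv (by simpa using hw.symm) hP
    · simp only [List.concat_eq_append, List.flatten_append, List.flatten_cons,
        List.flatten_nil, List.append_nil, ← List.append_assoc] at hw
      obtain rfl : h = g := (hP h (by simp)).eq_of_isSuffix_of_isSuffix (hQ g (by simp))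
        (List.suffix_append _ _) ⟨_, hw.symm⟩
      obtain ⟨rfl, rfl⟩ := ih (List.append_cancel_right hw) (fun x hx => hP x (by simp [hx]))
        (fun x hx => hQ x (by simp [hx]))
      simp

theorem IsHookFactorization.unique {w : List ℕ} {p q : List ℕ × List (List ℕ)}
    (hp : IsHookFactorization w p) (hq : IsHookFactorization w q) : p = q := by
  obtain ⟨rfl, hu, hP⟩ := hp
  obtain ⟨hw, hv, hQ⟩ := hq
  obtain ⟨h₁, h₂⟩ := eq_of_append_flatten_eq_append_flatten hw hu hv hP hQ
  exact Prod.ext h₁ h₂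

/-- Every finite sequence of distinct natural numbers has a
unique factorization as a (possibly empty) strictly increasing sequence
followed by a concatenation of hooks. -/
theorem hook_factorization_existsUnique (w : List ℕ) (hw : w.Nodup) :
    ∃! p : List ℕ × List (List ℕ),
      w = p.1 ++ p.2.flatten ∧ List.Chain' (· < ·) p.1 ∧ ∀ h ∈ p.2, IsHook h := by
  obtain ⟨p, hp⟩ := exists_isHookFactorization w hw
  exact ⟨p, hp, fun q hq => IsHookFactorization.unique hq hp⟩

end PaperStats
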